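/- arXiv:1803.04746 — 2 statements merged into one kernel-verified Lean document; each statement's English description precedes it below -/
import Mathlib

section
/- Let G and H be finite isolate-free simple graphs, let v be a vertex of G, and let S be a set of vertices of the Cartesian product G □ H such that every vertex of the fiber {v} × V(H) lies in the closed neighborhood N[S] (taken in G □ H) and every vertex of S is within distance at most 2 (in G □ H) of some other vertex of S. Then |S| ≥ γ_{t2}(H). -/
open SimpleGraph

/-- `S` is a semi-total dominating set of `G`: every vertex lies in the closed
neighborhood of `S`, and every vertex of `S` is within distance at most 2 of
another vertex of `S`. -/
def IsSemitotalDomSet {V : Type*} (G : SimpleGraph V) (S : Set V) : Prop :=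
  (∀ v : V, v ∈ S ∨ ∃ u ∈ S, G.Adj u v) ∧
  (∀ u ∈ S, ∃ w ∈ S, w ≠ u ∧ (G.Adj u w ∨ ∃ z, G.Adj u z ∧ G.Adj z w))

/-- The semi-total domination number of `G`. -/
noncomputable def semitotalDomNum {V : Type*} (G : SimpleGraph V) : ℕ :=
  sInf {n | ∃ S : Set V, IsSemitotalDomSet G S ∧ S.ncard = n}

theorem card_ge_semitotalDomNum_of_semitotallyDominates_fiber
    {α β : Type*} [Fintype α] [Fintype β]
    (G : SimpleGraph α) (H : SimpleGraph β)
    (hG : ∀ v : α, ∃ u : α, G.Adj v u) (hH : ∀ v : β, ∃ u : β, H.Adj v u)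
    (v : α) (S : Set (α × β))
    (hdom : ∀ b : β, (v, b) ∈ S ∨ ∃ x ∈ S, (G □ H).Adj x (v, b))
    (hsemi : ∀ x ∈ S, ∃ y ∈ S, y ≠ x ∧
      ((G □ H).Adj x y ∨ ∃ z, (G □ H).Adj x z ∧ (G □ H).Adj z y)) :
    S.ncard ≥ semitotalDomNum H := by
  classical
  rcases isEmpty_or_nonempty β with hβ | hβ
  · have h0 : semitotalDomNum H ≤ 0 := by
      apply Nat.sInf_le
      exact ⟨∅, ⟨fun b => (IsEmpty.false b).elim,
        fun u hu => absurd hu (Set.notMem_empty u)⟩, Set.ncard_empty _⟩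
    omega
  obtain ⟨b0⟩ := hβ
  choose f hf using hH
  set T : Set β := Prod.snd '' S with hT
  set B : Set β := {b | b ∈ T ∧ ¬ ∃ w ∈ T, w ≠ b ∧
      (H.Adj b w ∨ ∃ z, H.Adj b z ∧ H.Adj z w)} with hB
  -- each b ∈ B has two distinct preimages in S
  have hfib : ∀ b ∈ B, ∃ x ∈ S, ∃ y ∈ S, y ≠ x ∧ x.2 = b ∧ y.2 = b := by
    rintro b ⟨⟨x, hxS, hx2⟩, hnc⟩
    subst hx2
    obtain ⟨y, hyS, hyx, hcase⟩ := hsemi x hxS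
    refine ⟨x, hxS, y, hyS, hyx, rfl, ?_⟩
    by_contra hy2
    apply hnc
    refine ⟨y.2, ⟨y, hyS, rfl⟩, hy2, ?_⟩
    rcases hcase with h | ⟨z, h1, h2⟩
    · rw [boxProd_adj] at h
      rcases h with ⟨_, h⟩ | ⟨h, _⟩
      · exact absurd h.symm hy2
      · exact Or.inl h
    · rw [boxProd_adj] at h1 h2
      rcases h1 with ⟨_, e1⟩ | ⟨a1, e1⟩ <;> rcases h2 with ⟨_, e2⟩ | ⟨a2, e2⟩
      · exact absurd (e1.trans e2).symm hy2
      · exact Or.inl (by rw [e1]; exact a2)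
      · exact Or.inl (by rw [← e2]; exact a1)
      · exact Or.inr ⟨z.2, a1, a2⟩
  -- choice of preimages
  set p : β → α × β := fun b => if h : ∃ x ∈ S, x.2 = b then h.choose else (v, b0) with hp
  have hpT : ∀ b ∈ T, p b ∈ S ∧ (p b).2 = b := by
    intro b hb
    obtain ⟨x, hxS, hx2⟩ := hb
    have h : ∃ x ∈ S, x.2 = b := ⟨x, hxS, hx2⟩
    simp only [hp, dif_pos h]
    exact ⟨h.choose_spec.1, h.choose_spec.2⟩
  set q : β → α × β := fun b => if h : ∃ y ∈ S, y ≠ p b ∧ y.2 = b then h.choose else (v, b0)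
    with hq
  have hqB : ∀ b ∈ B, q b ∈ S ∧ q b ≠ p b ∧ (q b).2 = b := by
    intro b hb
    obtain ⟨x, hxS, y, hyS, hyx, hx2, hy2⟩ := hfib b hb
    have h : ∃ y ∈ S, y ≠ p b ∧ y.2 = b := by
      by_cases hx : x = p b
      · exact ⟨y, hyS, hx ▸ hyx, hy2⟩
      · exact ⟨x, hxS, hx, hx2⟩
    simp only [hq, dif_pos h]
    exact ⟨h.choose_spec.1, h.choose_spec.2.1, h.choose_spec.2.2⟩
  -- the modified set
  set T' : Set β := T ∪ f '' B with hT'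
  have hdom' : ∀ b : β, b ∈ T' ∨ ∃ u ∈ T', H.Adj u b := by
    intro b
    rcases hdom b with h | ⟨x, hxS, hadj⟩
    · exact Or.inl (Or.inl ⟨(v, b), h, rfl⟩)
    · rw [boxProd_adj] at hadj
      rcases hadj with ⟨_, e⟩ | ⟨a, _⟩
      · exact Or.inl (Or.inl ⟨x, hxS, e⟩)
      · exact Or.inr ⟨x.2, Or.inl ⟨x, hxS, rfl⟩, a⟩
  have hsemi' : ∀ b ∈ T', ∃ w ∈ T', w ≠ b ∧
      (H.Adj b w ∨ ∃ z, H.Adj b z ∧ H.Adj z w) := by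
    intro b hb
    rcases hb with hb | ⟨b1, hb1, rfl⟩
    · by_cases hbB : b ∈ B
      · exact ⟨f b, Or.inr ⟨b, hbB, rfl⟩, fun h => (hf b).ne' h, Or.inl (hf b)⟩
      · have : ∃ w ∈ T, w ≠ b ∧ (H.Adj b w ∨ ∃ z, H.Adj b z ∧ H.Adj z w) := by
          by_contra hc
          exact hbB ⟨hb, hc⟩
        obtain ⟨w, hwT, hwb, hw⟩ := this
        exact ⟨w, Or.inl hwT, hwb, hw⟩
    · exact ⟨b1, Or.inl hb1.1, (hf b1).ne, Or.inl (hf b1).symm⟩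
  have hmem : T'.ncard ∈ {n | ∃ S : Set β, IsSemitotalDomSet H S ∧ S.ncard = n} :=
    ⟨T', ⟨hdom', hsemi'⟩, rfl⟩
  have h1 : semitotalDomNum H ≤ T'.ncard := Nat.sInf_le hmem
  -- counting
  have hinjp : Set.InjOn p T := by
    intro a ha b hb h
    rw [← (hpT a ha).2, ← (hpT b hb).2, h]
  have hinjq : Set.InjOn q B := by
    intro a ha b hb h
    rw [← (hqB a ha).2.2, ← (hqB b hb).2.2, h]
  have hdisj : Disjoint (p '' T) (q '' B) := by
    rw [Set.disjoint_left]
    rintro x ⟨a, ha, rfl⟩ ⟨b, hb, hqb⟩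
    have hab : b = a := by
      rw [← (hqB b hb).2.2, hqb, (hpT a ha).2]
    exact (hqB b hb).2.1 (hqb.trans (by rw [hab]))
  have hsub : p '' T ∪ q '' B ⊆ S := by
    rintro x (⟨a, ha, rfl⟩ | ⟨b, hb, rfl⟩)
    · exact (hpT a ha).1
    · exact (hqB b hb).1
  have hcount : T.ncard + B.ncard ≤ S.ncard := by
    calc T.ncard + B.ncard = (p '' T).ncard + (q '' B).ncard := by
          rw [Set.ncard_image_of_injOn hinjp, Set.ncard_image_of_injOn hinjq]
      _ = (p '' T ∪ q '' B).ncard :=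
          (Set.ncard_union_eq hdisj (Set.toFinite _) (Set.toFinite _)).symm
      _ ≤ S.ncard := Set.ncard_le_ncard hsub (Set.toFinite _)
  have h2 : T'.ncard ≤ T.ncard + B.ncard := by
    calc T'.ncard ≤ T.ncard + (f '' B).ncard := Set.ncard_union_le _ _
      _ ≤ T.ncard + B.ncard := by
          have := Set.ncard_image_le (f := f) (s := B) (Set.toFinite _)
          omega
  omega
end

section
/- Let G be a finite isolate-free simple graph and let U be a semi-total dominating set of G. Let X = {u ∈ U : u is adjacent to at least one other vertex of U} (the allied vertices) and Y = U \ X (the free vertices). Then there exists a partition {π_u : u ∈ U} of V(G) indexed by U such that: (i) for every u ∈ X, π_u is contained in the open neighborhood N(u); (ii) for every u ∈ Y, π_u is contained in the closed neighborhood N[u]; and (iii) for every u ∈ X and w ∈ Y with d(u, w) = 2, no common neighbor of u and w lies in π_w, i.e., N(u) ∩ N(w) ∩ π_w = ∅. -/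
/-!
Every vertex `v` is handed to an owner in `U`: an allied neighbour of `v` if there is one;
otherwise `v` itself when `v ∈ U` (then `v` is free, since a neighbour of `v` in `U` would be
allied); otherwise a neighbour in `U` dominating `v`, which is then free as well. The parts are
the fibres of this choice. Condition (iii) holds because a vertex owned by a free vertex has no
allied neighbour at all.
-/

open SimpleGraph

/-- `u` is an allied vertex of `U` in `G`: it is adjacent to at least one
other vertex of `U`. -/
def Allied {V : Type*} (G : SimpleGraph V) (U : Set V) (u : V) : Prop :=
  ∃ w ∈ U, w ≠ u ∧ G.Adj u w

/-- `u` and `w` are at distance exactly 2 in `G`: distinct, nonadjacent,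
with a common neighbor. -/
def DistEqTwo {V : Type*} (G : SimpleGraph V) (u w : V) : Prop :=
  u ≠ w ∧ ¬G.Adj u w ∧ ∃ z : V, G.Adj u z ∧ G.Adj z w

section

variable {V : Type*} {G : SimpleGraph V} {U : Set V}

lemma allied_of_adj {u w : V} (hw : w ∈ U) (h : G.Adj u w) : Allied G U u :=
  ⟨w, hw, G.ne_of_adj h |>.symm, h⟩

structure CanOwn (G : SimpleGraph V) (U : Set V) (u v : V) : Prop where
  mem : u ∈ U
  adj_of_allied : Allied G U u → G.Adj u v
  mem_insert_of_not_allied : ¬Allied G U u → v ∈ insert u (G.neighborSet u)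
  not_adj_of_not_allied : ¬Allied G U u → ∀ x ∈ U, Allied G U x → ¬G.Adj x v

lemma exists_canOwn (hdom : ∀ v : V, v ∈ U ∨ ∃ u ∈ U, G.Adj u v) (v : V) :
    ∃ u, CanOwn G U u v := by
  by_cases hallied : ∃ x ∈ U, Allied G U x ∧ G.Adj x v
  · obtain ⟨x, hxU, hxa, hxv⟩ := hallied
    exact ⟨x, hxU, fun _ => hxv, fun h => (h hxa).elim, fun h => (h hxa).elim⟩
  push Not at hallied
  by_cases hv : v ∈ U
  · have hva : ¬Allied G U v := fun ⟨w, hwU, _, hvw⟩ =>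
      hallied w hwU (allied_of_adj hv hvw.symm) hvw.symm
    exact ⟨v, hv, fun h => (hva h).elim, fun _ => Set.mem_insert v _, fun _ => hallied⟩
  · obtain ⟨u, huU, huv⟩ := (hdom v).resolve_left hv
    have hua : ¬Allied G U u := fun h => hallied u huU h huv
    exact ⟨u, huU, fun h => (hua h).elim, fun _ => Set.mem_insert_of_mem u huv,
      fun _ => hallied⟩

end

theorem exists_partition_of_semitotalDomSet_general
    {V : Type*} (G : SimpleGraph V)
    (U : Set V) (hU : IsSemitotalDomSet G U) :
    ∃ π : V → Set V,
      -- the parts are pairwise disjoint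
      (∀ u ∈ U, ∀ w ∈ U, u ≠ w → Disjoint (π u) (π w)) ∧
      -- the parts cover all of `V(G)`
      (⋃ u ∈ U, π u) = Set.univ ∧
      -- (i) the part of an allied vertex lies in its open neighborhood
      (∀ u ∈ U, Allied G U u → π u ⊆ G.neighborSet u) ∧
      -- (ii) the part of a free vertex lies in its closed neighborhood
      (∀ u ∈ U, ¬Allied G U u → π u ⊆ insert u (G.neighborSet u)) ∧
      -- (iii) for allied `u` and free `w` at distance 2, no common neighbor
      -- of `u` and `w` lies in `π w`
      (∀ u ∈ U, ∀ w ∈ U, Allied G U u → ¬Allied G U w → DistEqTwo G u w →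
        G.neighborSet u ∩ G.neighborSet w ∩ π w = ∅) := by
  choose owner hown using exists_canOwn hU.1
  refine ⟨fun u => {v | owner v = u}, ?_, ?_, ?_, ?_, ?_⟩
  · exact fun u _ w _ huw => Set.disjoint_left.mpr fun v hu hw => huw (hu ▸ hw)
  · exact Set.eq_univ_of_forall fun v => Set.mem_biUnion (hown v).mem rfl
  · rintro u - hua v rfl
    exact (hown v).adj_of_allied hua
  · rintro u - hua v rfl
    exact (hown v).mem_insert_of_not_allied hua
  · rintro u huU w - hua hwa -
    refine Set.eq_empty_of_forall_notMem ?_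
    rintro v ⟨⟨huv, -⟩, rfl⟩
    exact (hown v).not_adj_of_not_allied hwa u huU hua huv

theorem exists_partition_of_semitotalDomSet
    {V : Type*} [Fintype V] (G : SimpleGraph V)
    (hG : ∀ v : V, ∃ u : V, G.Adj v u)
    (U : Set V) (hU : IsSemitotalDomSet G U) :
    ∃ π : V → Set V,
      -- the parts are pairwise disjoint
      (∀ u ∈ U, ∀ w ∈ U, u ≠ w → Disjoint (π u) (π w)) ∧
      -- the parts cover all of `V(G)`
      (⋃ u ∈ U, π u) = Set.univ ∧
      -- (i) the part of an allied vertex lies in its open neighborhood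
      (∀ u ∈ U, Allied G U u → π u ⊆ G.neighborSet u) ∧
      -- (ii) the part of a free vertex lies in its closed neighborhood
      (∀ u ∈ U, ¬Allied G U u → π u ⊆ insert u (G.neighborSet u)) ∧
      -- (iii) for allied `u` and free `w` at distance 2, no common neighbor
      -- of `u` and `w` lies in `π w`
      (∀ u ∈ U, ∀ w ∈ U, Allied G U u → ¬Allied G U w → DistEqTwo G u w →
        G.neighborSet u ∩ G.neighborSet w ∩ π w = ∅) :=
  exists_partition_of_semitotalDomSet_general G U hU
end
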